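/- arXiv:2106.02411 — 2 statements merged into one kernel-verified Lean document; each statement's English description precedes it below -/
import Mathlib

section
/- Let Γ and G be groups, X a set, and σ : Γ × X → G, f : X → G any maps, where Γ acts on X. For every n ≥ 0 and every function ψ : G^{n+1} → ℝ (no invariance assumed), the homotopy identity holds pointwise: for all γ₀, …, γ_n ∈ Γ and all x ∈ X, s^{n+1}(σ,f)(δ^n ψ)(γ₀,…,γ_n)(x) + (δ^{n−1}(s^n(σ,f)(ψ)))(γ₀,…,γ_n)(x) = C^n(σ)(ψ)(γ₀,…,γ_n)(x) − ρ^n_n(σ,f)(ψ)(γ₀,…,γ_n)(x), with the conventions s^0(σ,f) = 0 and δ^{−1} = 0. -/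
noncomputable section

/-- The homogeneous coboundary operator on `G`-cochains:
`(δ^n ψ)(g₀, …, g_{n+1}) := Σ_{i=0}^{n+1} (−1)^i ψ(g₀, …, ĝ_i, …, g_{n+1})`. -/
def coboundG {Y : Type*} (n : ℕ) (ψ : (Fin (n + 1) → Y) → ℝ)
    (g : Fin (n + 2) → Y) : ℝ :=
  ∑ i : Fin (n + 2), (-1 : ℝ) ^ (i : ℕ) * ψ fun j => g (i.succAbove j)

/-- The pullback cochain along `σ` (families of group elements indexed by `ℕ`,
only the first `n + 1` entries matter):
`C^n(σ)(ψ)(γ₀, …, γ_n)(x) := ψ(σ(γ₀⁻¹, x)⁻¹, …, σ(γ_n⁻¹, x)⁻¹)`. -/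
def pullCochain {Γ G X : Type*} [Group Γ] [Group G] (σ : Γ → X → G) (n : ℕ)
    (ψ : (Fin (n + 1) → G) → ℝ) (γ : ℕ → Γ) (x : X) : ℝ :=
  ψ fun k => (σ (γ (k : ℕ))⁻¹ x)⁻¹

/-- `ρ^n_n(σ,f)(ψ)(γ₀,…,γ_n)(x) :=
ψ(σ(γ₀⁻¹,x)⁻¹ f(γ₀⁻¹·x), …, σ(γ_n⁻¹,x)⁻¹ f(γ_n⁻¹·x))`: all entries twisted. -/
def rhoTop {Γ G X : Type*} [Group Γ] [Group G] [MulAction Γ X]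
    (σ : Γ → X → G) (f : X → G) (n : ℕ)
    (ψ : (Fin (n + 1) → G) → ℝ) (γ : ℕ → Γ) (x : X) : ℝ :=
  ψ fun k => (σ (γ (k : ℕ))⁻¹ x)⁻¹ * f ((γ (k : ℕ))⁻¹ • x)

/-- `s_i^n(σ,f)(ψ)(γ₀,…,γ_{n−1})(x)`: arguments `0, …, i` twisted by `f`, then
arguments `i, …, n−1` untwisted (the index `i` occurs twice). -/
def sTerm {Γ G X : Type*} [Group Γ] [Group G] [MulAction Γ X]
    (σ : Γ → X → G) (f : X → G) (n : ℕ) (i : ℕ)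
    (ψ : (Fin (n + 1) → G) → ℝ) (γ : ℕ → Γ) (x : X) : ℝ :=
  ψ fun k =>
    if (k : ℕ) ≤ i then (σ (γ (k : ℕ))⁻¹ x)⁻¹ * f ((γ (k : ℕ))⁻¹ • x)
    else if (k : ℕ) = i + 1 then (σ (γ i)⁻¹ x)⁻¹
    else (σ (γ ((k : ℕ) - 1))⁻¹ x)⁻¹

/-- `s^n(σ,f) := Σ_{i=0}^{n−1} (−1)^i s_i^n(σ,f)`; for `n = 0` this is the empty sum,
realizing the convention `s^0(σ,f) = 0`. -/
def sHomotopy {Γ G X : Type*} [Group Γ] [Group G] [MulAction Γ X]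
    (σ : Γ → X → G) (f : X → G) (n : ℕ)
    (ψ : (Fin (n + 1) → G) → ℝ) (γ : ℕ → Γ) (x : X) : ℝ :=
  ∑ i ∈ Finset.range n, (-1 : ℝ) ^ i * sTerm σ f n i ψ γ x

/-- The homogeneous coboundary operator with `m` terms on `Γ`-cochains:
`(δ F)(γ₀, …)(x) = Σ_{i=0}^{m−1} (−1)^i F(γ₀, …, γ̂_i, …)(x)`. Applied with
`m = n + 1` to `s^n(σ,f)(ψ)` it yields `δ^{n−1}(s^n(σ,f)(ψ))`; for `n = 0` the
summand is `s^0 = 0`, realizing the convention `δ^{−1} = 0`. -/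
def coboundCochain {Γ X : Type*} (m : ℕ) (F : (ℕ → Γ) → X → ℝ)
    (γ : ℕ → Γ) (x : X) : ℝ :=
  ∑ i ∈ Finset.range m, (-1 : ℝ) ^ i *
    F (fun k => if k < i then γ k else γ (k + 1)) x

/-!
Write `a k = σ(γ_k⁻¹, x)⁻¹` and `b k = a k · f(γ_k⁻¹ · x)`. Then `s_i` evaluates `ψ` on the prism
simplex `(b₀, …, b_i, a_i, …, a_n)` of `Δⁿ × Δ¹`, and the homotopy identity is the usual prism
computation: faces of prism simplices that do not remove one of the two middle vertices are
prism simplices of faces, and cancel against `δ s`; the remaining faces telescope from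
`(a₀, …, a_n)` to `(b₀, …, b_n)`.
-/

open Finset

lemma sum_alternating_row_split (n i : ℕ) (hi : i ≤ n) (e : ℕ → ℝ) :
    (-1 : ℝ) ^ i * ∑ j ∈ range (n + 2), (-1 : ℝ) ^ j * e j =
      ∑ j ∈ range i, (-1 : ℝ) ^ (i + j) * e j + (e i - e (i + 1)) +
        ∑ j ∈ Ico (i + 2) (n + 2), (-1 : ℝ) ^ (i + j) * e j := by
  rw [mul_sum, ← sum_range_add_sum_Ico _ (by omega : i ≤ n + 2),
    sum_eq_sum_Ico_succ_bot (by omega : i < n + 2),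
    sum_eq_sum_Ico_succ_bot (by omega : i + 1 < n + 2)]
  simp only [← mul_assoc, ← pow_add, Even.neg_one_pow ⟨i, rfl⟩,
    Odd.neg_one_pow (⟨i, by ring⟩ : Odd (i + (i + 1)))]
  ring

/-- The combinatorial core of the prism argument: `E i j` stands for the `j`-th face of the
`i`-th prism simplex, `S q p` for the `q`-th prism simplex of the `p`-th face, and `W m` for the
simplex whose first `m` vertices are twisted. -/
theorem sum_prism_faces_add_sum_faces_prism (n : ℕ) (E S : ℕ → ℕ → ℝ) (W : ℕ → ℝ)
    (h_lt : ∀ q p, p ≤ q → E (q + 1) p = S q p)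
    (h_gt : ∀ i p, i < p → E i (p + 1) = S i p)
    (h_self : ∀ i, E i i = W i) (h_succ : ∀ i, E i (i + 1) = W (i + 1)) :
    ∑ i ∈ range (n + 1), (-1 : ℝ) ^ i * ∑ j ∈ range (n + 2), (-1 : ℝ) ^ j * E i j +
        ∑ p ∈ range (n + 1), (-1 : ℝ) ^ p * ∑ q ∈ range n, (-1 : ℝ) ^ q * S q p =
      W 0 - W (n + 1) := by
  set L : ℕ → ℝ := fun q => ∑ p ∈ range (q + 1), (-1 : ℝ) ^ (q + p) * S q p
  set U : ℕ → ℝ := fun q => ∑ p ∈ Ico (q + 1) (n + 1), (-1 : ℝ) ^ (q + p) * S q p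
  have lower : ∀ q, ∑ j ∈ range (q + 1), (-1 : ℝ) ^ (q + 1 + j) * E (q + 1) j = -L q := by
    intro q
    rw [← sum_neg_distrib]
    refine sum_congr rfl fun p hp => ?_
    rw [h_lt q p (by simpa [Nat.lt_succ_iff] using hp), pow_add _ (q + 1), pow_succ]
    ring
  have upper : ∀ i, ∑ j ∈ Ico (i + 2) (n + 2), (-1 : ℝ) ^ (i + j) * E i j = -U i := by
    intro i
    rw [← sum_Ico_add' (fun j => (-1 : ℝ) ^ (i + j) * E i j) (i + 1) (n + 1) 1,
      ← sum_neg_distrib]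
    refine sum_congr rfl fun p hp => ?_
    rw [h_gt i p (by simp at hp; omega), ← add_assoc, pow_succ]
    ring
  have rows : ∑ i ∈ range (n + 1), (-1 : ℝ) ^ i * ∑ j ∈ range (n + 2), (-1 : ℝ) ^ j * E i j =
      -∑ q ∈ range n, L q + (W 0 - W (n + 1)) - ∑ q ∈ range n, U q := by
    rw [sum_congr rfl fun i hi => sum_alternating_row_split n i
      (Nat.lt_succ_iff.mp (mem_range.mp hi)) (E i)]
    simp only [sum_add_distrib, h_self, h_succ, sum_range_sub']
    rw [sum_range_succ', sum_range_succ _ n]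
    simp only [lower, upper, range_zero, sum_empty, zero_add, U, Ico_self, add_zero,
      sum_neg_distrib]
    ring
  have columns : ∑ p ∈ range (n + 1), (-1 : ℝ) ^ p * ∑ q ∈ range n, (-1 : ℝ) ^ q * S q p =
      ∑ q ∈ range n, L q + ∑ q ∈ range n, U q := by
    simp only [mul_sum, ← mul_assoc, ← pow_add]
    rw [sum_comm, ← sum_add_distrib]
    refine sum_congr rfl fun q hq => ?_
    rw [sum_range_add_sum_Ico _ (by simp at hq; omega)]
    exact sum_congr rfl fun p _ => by rw [add_comm p q]
  rw [rows, columns]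
  ring

section Prism

variable {α : Type*}

def coface (p k : ℕ) : ℕ := if k < p then k else k + 1

def prism (i : ℕ) (b a : ℕ → α) (k : ℕ) : α :=
  if k ≤ i then b k else if k = i + 1 then a i else a (k - 1)

def splice (m : ℕ) (b a : ℕ → α) (k : ℕ) : α := if k < m then b k else a k

lemma prism_comp_coface_of_le {p q : ℕ} (h : p ≤ q) (b a : ℕ → α) :
    prism (q + 1) b a ∘ coface p = prism q (b ∘ coface p) (a ∘ coface p) := by
  funext k
  simp only [Function.comp, prism, coface]
  split_ifs <;> first | rfl | omega | (congr 1; omega)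

lemma prism_comp_coface_succ_of_lt {i p : ℕ} (h : i < p) (b a : ℕ → α) :
    prism i b a ∘ coface (p + 1) = prism i (b ∘ coface p) (a ∘ coface p) := by
  funext k
  simp only [Function.comp, prism, coface]
  split_ifs <;> first | rfl | omega | (congr 1; omega)

lemma prism_comp_coface_self (i : ℕ) (b a : ℕ → α) :
    prism i b a ∘ coface i = splice i b a := by
  funext k
  simp only [Function.comp, prism, coface, splice]
  split_ifs <;> first | rfl | omega | (congr 1; omega)

lemma prism_comp_coface_succ (i : ℕ) (b a : ℕ → α) :
    prism i b a ∘ coface (i + 1) = splice (i + 1) b a := by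
  funext k
  simp only [Function.comp, prism, coface, splice]
  split_ifs <;> first | rfl | omega

lemma ite_succ_eq_comp_coface (u : ℕ → α) (p : ℕ) :
    (fun k => if k < p then u k else u (k + 1)) = u ∘ coface p := by
  funext k
  simp only [Function.comp, coface, apply_ite u]

lemma Fin.val_succAbove_eq_coface {m : ℕ} (p : Fin (m + 1)) (k : Fin m) :
    (p.succAbove k : ℕ) = coface p k := by
  simp only [Fin.succAbove, Fin.lt_def, Fin.val_castSucc, coface]
  split_ifs <;> rfl

end Prism

lemma coboundG_eq_sum_coface {Y : Type*} (n : ℕ) (ψ : (Fin (n + 1) → Y) → ℝ) (u : ℕ → Y) :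
    coboundG n ψ (fun k => u k) =
      ∑ j ∈ range (n + 2), (-1 : ℝ) ^ j * ψ fun k => (u ∘ coface j) k := by
  rw [coboundG, ← Fin.sum_univ_eq_sum_range (fun j => (-1 : ℝ) ^ j * ψ fun k => (u ∘ coface j) k)]
  simp only [Fin.val_succAbove_eq_coface, Function.comp]

section Cochains

variable {Γ G X : Type*} [Group Γ] [Group G] [MulAction Γ X]

def pullSeq (σ : Γ → X → G) (γ : ℕ → Γ) (x : X) (k : ℕ) : G := (σ (γ k)⁻¹ x)⁻¹

def twistSeq (σ : Γ → X → G) (f : X → G) (γ : ℕ → Γ) (x : X) (k : ℕ) : G :=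
  pullSeq σ γ x k * f ((γ k)⁻¹ • x)

lemma sTerm_eq_prism (σ : Γ → X → G) (f : X → G) (n i : ℕ) (ψ : (Fin (n + 1) → G) → ℝ)
    (γ : ℕ → Γ) (x : X) :
    sTerm σ f n i ψ γ x = ψ fun k => prism i (twistSeq σ f γ x) (pullSeq σ γ x) k :=
  rfl

end Cochains

/-- For every `n ≥ 0` and every `ψ : G^{n+1} → ℝ` (no invariance
assumed), the homotopy identity holds pointwise:
`s^{n+1}(σ,f)(δ^n ψ) + δ^{n−1}(s^n(σ,f)(ψ)) = C^n(σ)(ψ) − ρ^n_n(σ,f)(ψ)`,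
with the conventions `s^0(σ,f) = 0` and `δ^{−1} = 0`. -/
theorem homotopy_identity {Γ G X : Type*} [Group Γ] [Group G] [MulAction Γ X]
    (σ : Γ → X → G) (f : X → G) (n : ℕ) (ψ : (Fin (n + 1) → G) → ℝ)
    (γ : ℕ → Γ) (x : X) :
    sHomotopy σ f (n + 1) (coboundG n ψ) γ x +
        coboundCochain (n + 1) (sHomotopy σ f n ψ) γ x =
      pullCochain σ n ψ γ x - rhoTop σ f n ψ γ x := by
  set a := pullSeq σ γ x
  set b := twistSeq σ f γ x
  let Φ : (ℕ → G) → ℝ := fun u => ψ fun k => u k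
  have h_sδ : sHomotopy σ f (n + 1) (coboundG n ψ) γ x =
      ∑ i ∈ range (n + 1), (-1 : ℝ) ^ i *
        ∑ j ∈ range (n + 2), (-1 : ℝ) ^ j * Φ (prism i b a ∘ coface j) := by
    simp only [sHomotopy, sTerm_eq_prism, coboundG_eq_sum_coface]
    rfl
  have h_δs : coboundCochain (n + 1) (sHomotopy σ f n ψ) γ x =
      ∑ p ∈ range (n + 1), (-1 : ℝ) ^ p *
        ∑ q ∈ range n, (-1 : ℝ) ^ q * Φ (prism q (b ∘ coface p) (a ∘ coface p)) := by
    simp only [coboundCochain, sHomotopy, sTerm_eq_prism, ite_succ_eq_comp_coface]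
    rfl
  rw [h_sδ, h_δs, sum_prism_faces_add_sum_faces_prism n _ _ (fun m => Φ (splice m b a))
    (fun q p h => by rw [prism_comp_coface_of_le h])
    (fun i p h => by rw [prism_comp_coface_succ_of_lt h])
    (fun i => by rw [prism_comp_coface_self]) (fun i => by rw [prism_comp_coface_succ])]
  simp [Φ, splice, pullCochain, rhoTop, a, b, pullSeq, twistSeq, Fin.is_le]
end
end

section
/- Let Γ and G be groups, Γ acting on a set X, and σ : Γ × X → G, f : X → G any maps. For every n ≥ 0 and every G-invariant function ψ : G^{n+1} → ℝ, the pullbacks along σ and along the twist σ^f differ by an explicit chain homotopy: pointwise in (γ₀, …, γ_n) ∈ Γ^{n+1} and x ∈ X, C^n(σ)(ψ) − C^n(σ^f)(ψ) = s^{n+1}(σ,f)(δ^n ψ) + δ^{n−1}(s^n(σ,f)(ψ)). In particular, if moreover δ^n ψ = 0, then C^n(σ)(ψ) − C^n(σ^f)(ψ) is the coboundary δ^{n−1}(s^n(σ,f)(ψ)). -/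
noncomputable section

/-- The `f`-twisted cocycle `σ^f(γ, x) := f(γ·x)⁻¹ · σ(γ, x) · f(x)`. -/
def twistCocycle {Γ G X : Type*} [Group G] [SMul Γ X]
    (σ : Γ → X → G) (f : X → G) (γ : Γ) (x : X) : G :=
  (f (γ • x))⁻¹ * σ γ x * f x

/-! ### Auxiliary combinatorial machinery -/

section Aux

open Finset

variable {G : Type*}

/-- Skip index `j`. -/
def ddAux (j : ℕ) (g : ℕ → G) (k : ℕ) : G := if k < j then g k else g (k + 1)

/-- Prism tuple at level `i`. -/
def ppAux (a t : ℕ → G) (i : ℕ) (k : ℕ) : G := if k ≤ i then t k else a (k - 1)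

/-- Partial twist: first `i` entries from `t`, the rest from `a`. -/
def vvAux (a t : ℕ → G) (i : ℕ) (k : ℕ) : G := if k < i then t k else a k

lemma key1 (a t : ℕ → G) {i j : ℕ} (h : j < i) :
    ddAux j (ppAux a t i) = ppAux (ddAux j a) (ddAux j t) (i - 1) := by
  funext k
  simp only [ddAux, ppAux]
  split_ifs <;> first | rfl | (congr 1; omega) | omega

lemma key2 (a t : ℕ → G) (i : ℕ) : ddAux i (ppAux a t i) = vvAux a t i := by
  funext k
  simp only [ddAux, ppAux, vvAux]
  split_ifs <;> first | rfl | (congr 1; omega) | omega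

lemma key3 (a t : ℕ → G) (i : ℕ) :
    ddAux (i + 1) (ppAux a t i) = vvAux a t (i + 1) := by
  funext k
  simp only [ddAux, ppAux, vvAux]
  split_ifs <;> first | rfl | (congr 1; omega) | omega

lemma key4 (a t : ℕ → G) {i j : ℕ} (h : i + 2 ≤ j) :
    ddAux j (ppAux a t i) = ppAux (ddAux (j - 1) a) (ddAux (j - 1) t) i := by
  funext k
  simp only [ddAux, ppAux]
  split_ifs <;> first | rfl | (congr 1; omega) | omega

lemma flattenAux (m l : ℕ) (F : ℕ → ℕ → ℝ) :
    ∑ i ∈ range m, (-1 : ℝ) ^ i * ∑ j ∈ range l, (-1 : ℝ) ^ j * F i j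
      = ∑ p ∈ range m ×ˢ range l, (-1 : ℝ) ^ (p.1 + p.2) * F p.1 p.2 := by
  rw [Finset.sum_product]
  refine Finset.sum_congr rfl fun i _ => ?_
  rw [Finset.mul_sum]
  refine Finset.sum_congr rfl fun j _ => ?_
  rw [pow_add]; ring

/-- The core chain-homotopy identity, in purely combinatorial form. -/
lemma coreAux (Ψ : (ℕ → G) → ℝ) (a t : ℕ → G) (n : ℕ) :
    Ψ (vvAux a t 0) - Ψ (vvAux a t (n + 1)) =
      (∑ i ∈ range (n + 1), (-1 : ℝ) ^ i *
          ∑ j ∈ range (n + 2), (-1 : ℝ) ^ j * Ψ (ddAux j (ppAux a t i)))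
        + ∑ j ∈ range (n + 1), (-1 : ℝ) ^ j *
            ∑ i ∈ range n, (-1 : ℝ) ^ i * Ψ (ppAux (ddAux j a) (ddAux j t) i) := by
  rw [flattenAux, flattenAux]
  set C : ℕ × ℕ → ℝ := fun p => (-1 : ℝ) ^ (p.1 + p.2) * Ψ (ddAux p.2 (ppAux a t p.1))
    with hC
  set D : ℕ × ℕ → ℝ :=
    fun q => (-1 : ℝ) ^ (q.1 + q.2) * Ψ (ppAux (ddAux q.1 a) (ddAux q.1 t) q.2) with hD
  have hsplit := Finset.sum_filter_add_sum_filter_not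
    (range (n + 1) ×ˢ range (n + 2)) (fun p => p.2 = p.1 ∨ p.2 = p.1 + 1) C
  -- Diagonal part telescopes
  have hdiag : ∑ p ∈ (range (n + 1) ×ˢ range (n + 2)).filter
      (fun p => p.2 = p.1 ∨ p.2 = p.1 + 1), C p =
      Ψ (vvAux a t 0) - Ψ (vvAux a t (n + 1)) := by
    have h1 : ∑ p ∈ (range (n + 1) ×ˢ range (n + 2)).filter
        (fun p => p.2 = p.1 ∨ p.2 = p.1 + 1), C p =
        ∑ q ∈ range (n + 1) ×ˢ range 2, C (q.1, q.1 + q.2) := by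
      refine Finset.sum_nbij' (fun p => (p.1, p.2 - p.1)) (fun q => (q.1, q.1 + q.2))
        ?_ ?_ ?_ ?_ ?_
      · rintro ⟨i, j⟩ hp
        simp only [Finset.mem_filter, Finset.mem_product, Finset.mem_range] at hp
        try dsimp only
        try split_ifs
        all_goals try simp only [Finset.mem_filter, Finset.mem_product, Finset.mem_range,
          Prod.mk.injEq, true_and, and_true]
        all_goals try dsimp only
        all_goals omega
      · rintro ⟨i, j⟩ hq
        simp only [Finset.mem_filter, Finset.mem_product, Finset.mem_range] at hq
        try dsimp only
        try split_ifs
        all_goals try simp only [Finset.mem_filter, Finset.mem_product, Finset.mem_range,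
          Prod.mk.injEq, true_and, and_true]
        all_goals try dsimp only
        all_goals omega
      · rintro ⟨i, j⟩ hp
        simp only [Finset.mem_filter, Finset.mem_product, Finset.mem_range] at hp
        try dsimp only
        try split_ifs
        all_goals try simp only [Finset.mem_filter, Finset.mem_product, Finset.mem_range,
          Prod.mk.injEq, true_and, and_true]
        all_goals try dsimp only
        all_goals omega
      · rintro ⟨i, j⟩ hq
        simp only [Finset.mem_filter, Finset.mem_product, Finset.mem_range] at hq
        try dsimp only
        try split_ifs
        all_goals try simp only [Finset.mem_filter, Finset.mem_product, Finset.mem_range,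
          Prod.mk.injEq, true_and, and_true]
        all_goals try dsimp only
        all_goals omega
      · intro p hp
        simp only [Finset.mem_filter, Finset.mem_product, Finset.mem_range] at hp
        have : p.1 + (p.2 - p.1) = p.2 := by omega
        rw [this]
    rw [h1, Finset.sum_product]
    have h2 : ∀ i, ∑ j ∈ range 2, C (i, i + j) =
        Ψ (vvAux a t i) - Ψ (vvAux a t (i + 1)) := by
      intro i
      rw [Finset.sum_range_succ, Finset.sum_range_one]
      simp only [hC, Nat.add_zero]
      rw [key2, key3]
      have e1 : (-1 : ℝ) ^ (i + i) = 1 := Even.neg_one_pow ⟨i, rfl⟩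
      have e2 : (-1 : ℝ) ^ (i + (i + 1)) = -1 := Odd.neg_one_pow ⟨i, by omega⟩
      rw [e1, e2]; ring
    calc ∑ i ∈ range (n + 1), ∑ j ∈ range 2, C (i, i + j)
        = ∑ i ∈ range (n + 1), (Ψ (vvAux a t i) - Ψ (vvAux a t (i + 1))) :=
          Finset.sum_congr rfl fun i _ => h2 i
      _ = Ψ (vvAux a t 0) - Ψ (vvAux a t (n + 1)) :=
          Finset.sum_range_sub' (fun i => Ψ (vvAux a t i)) (n + 1)
  -- Off-diagonal part cancels the second sum
  have hoff : ∑ p ∈ (range (n + 1) ×ˢ range (n + 2)).filter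
      (fun p => ¬(p.2 = p.1 ∨ p.2 = p.1 + 1)), C p =
      ∑ q ∈ range (n + 1) ×ˢ range n, -D q := by
    refine Finset.sum_nbij'
      (fun p => if p.2 < p.1 then (p.2, p.1 - 1) else (p.2 - 1, p.1))
      (fun q => if q.1 ≤ q.2 then (q.2 + 1, q.1) else (q.2, q.1 + 1)) ?_ ?_ ?_ ?_ ?_
    · rintro ⟨i, j⟩ hp
      simp only [Finset.mem_filter, Finset.mem_product, Finset.mem_range] at hp
      try dsimp only
      try split_ifs
      all_goals try simp only [Finset.mem_filter, Finset.mem_product, Finset.mem_range,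
        Prod.mk.injEq, true_and, and_true]
      all_goals try dsimp only
      all_goals omega
    · rintro ⟨i, j⟩ hq
      simp only [Finset.mem_filter, Finset.mem_product, Finset.mem_range] at hq
      try dsimp only
      try split_ifs
      all_goals try simp only [Finset.mem_filter, Finset.mem_product, Finset.mem_range,
        Prod.mk.injEq, true_and, and_true]
      all_goals try dsimp only
      all_goals omega
    · rintro ⟨i, j⟩ hp
      simp only [Finset.mem_filter, Finset.mem_product, Finset.mem_range] at hp
      try dsimp only
      try split_ifs
      all_goals try simp only [Finset.mem_filter, Finset.mem_product, Finset.mem_range,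
        Prod.mk.injEq, true_and, and_true]
      all_goals try dsimp only
      all_goals omega
    · rintro ⟨i, j⟩ hq
      simp only [Finset.mem_filter, Finset.mem_product, Finset.mem_range] at hq
      try dsimp only
      try split_ifs
      all_goals try simp only [Finset.mem_filter, Finset.mem_product, Finset.mem_range,
        Prod.mk.injEq, true_and, and_true]
      all_goals try dsimp only
      all_goals omega
    · rintro ⟨i, j⟩ hp
      simp only [Finset.mem_filter, Finset.mem_product, Finset.mem_range] at hp
      dsimp only
      by_cases hlt : j < i
      · rw [if_pos hlt]
        simp only [hC, hD]
        try dsimp only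
        rw [key1 a t hlt]
        have h1 : i + j = (j + (i - 1)) + 1 := by omega
        rw [h1, pow_succ]
        ring
      · rw [if_neg hlt]
        have hge : i + 2 ≤ j := by omega
        simp only [hC, hD]
        try dsimp only
        rw [key4 a t hge]
        have h1 : i + j = (j - 1 + i) + 1 := by omega
        rw [h1, pow_succ]
        ring
  rw [← hsplit, hdiag, hoff, Finset.sum_neg_distrib]
  ring

end Aux

lemma succAbove_coe {n : ℕ} (i : Fin (n + 2)) (l : Fin (n + 1)) :
    ((i.succAbove l : Fin (n + 2)) : ℕ) = if (l : ℕ) < (i : ℕ) then (l : ℕ) else l + 1 := by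
  rw [Fin.succAbove]
  split_ifs with h1 h2 h2
  · rfl
  · exact absurd (by simpa [Fin.lt_def] using h1) h2
  · exact absurd (by simpa [Fin.lt_def] using h2) h1
  · rfl

/-- Restriction functional. -/
def psiF {G : Type*} (n : ℕ) (ψ : (Fin (n + 1) → G) → ℝ) : (ℕ → G) → ℝ :=
  fun h => ψ fun k : Fin (n + 1) => h (k : ℕ)

lemma coboundG_eq {G : Type*} (n : ℕ) (ψ : (Fin (n + 1) → G) → ℝ) (g : ℕ → G) :
    coboundG n ψ (fun k : Fin (n + 2) => g k) =
      ∑ j ∈ Finset.range (n + 2), (-1 : ℝ) ^ j * psiF n ψ (ddAux j g) := by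
  rw [coboundG, ← Fin.sum_univ_eq_sum_range
    (fun j => (-1 : ℝ) ^ j * psiF n ψ (ddAux j g)) (n + 2)]
  refine Finset.sum_congr rfl fun i _ => ?_
  have harg : (fun j : Fin (n + 1) => g ((i.succAbove j : Fin (n + 2)) : ℕ)) =
      fun k : Fin (n + 1) => ddAux (i : ℕ) g (k : ℕ) := by
    funext l
    simp only [ddAux, succAbove_coe]
    split_ifs <;> rfl
  rw [psiF, harg]

/-- Tuple of inverse cocycle values. -/
def aF {Γ G X : Type*} [Group Γ] [Group G] (σ : Γ → X → G) (γ : ℕ → Γ) (x : X) : ℕ → G :=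
  fun k => (σ (γ k)⁻¹ x)⁻¹

/-- Tuple of twisted inverse cocycle values. -/
def tF {Γ G X : Type*} [Group Γ] [Group G] [MulAction Γ X] (σ : Γ → X → G) (f : X → G)
    (γ : ℕ → Γ) (x : X) : ℕ → G :=
  fun k => (σ (γ k)⁻¹ x)⁻¹ * f ((γ k)⁻¹ • x)

theorem pull_twist_chain_homotopic {Γ G X : Type*} [Group Γ] [Group G]
    [MulAction Γ X] (σ : Γ → X → G) (f : X → G) (n : ℕ)
    (ψ : (Fin (n + 1) → G) → ℝ)
    (hψ : ∀ (g : G) (gs : Fin (n + 1) → G), ψ (fun j => g * gs j) = ψ gs) :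
    (∀ (γ : ℕ → Γ) (x : X),
      pullCochain σ n ψ γ x - pullCochain (twistCocycle σ f) n ψ γ x =
        sHomotopy σ f (n + 1) (coboundG n ψ) γ x +
          coboundCochain (n + 1) (sHomotopy σ f n ψ) γ x) ∧
    ((∀ g : Fin (n + 2) → G, coboundG n ψ g = 0) →
      ∀ (γ : ℕ → Γ) (x : X),
        pullCochain σ n ψ γ x - pullCochain (twistCocycle σ f) n ψ γ x =
          coboundCochain (n + 1) (sHomotopy σ f n ψ) γ x) := by
  have main : ∀ (γ : ℕ → Γ) (x : X),
      pullCochain σ n ψ γ x - pullCochain (twistCocycle σ f) n ψ γ x =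
        sHomotopy σ f (n + 1) (coboundG n ψ) γ x +
          coboundCochain (n + 1) (sHomotopy σ f n ψ) γ x := by
    intro γ x
    have key := coreAux (psiF n ψ) (aF σ γ x) (tF σ f γ x) n
    have e1 : pullCochain σ n ψ γ x = psiF n ψ (vvAux (aF σ γ x) (tF σ f γ x) 0) := by
      simp only [pullCochain, psiF, vvAux, Nat.not_lt_zero, if_false, aF]
    have e2 : pullCochain (twistCocycle σ f) n ψ γ x =
        psiF n ψ (vvAux (aF σ γ x) (tF σ f γ x) (n + 1)) := by
      have e2a : pullCochain (twistCocycle σ f) n ψ γ x =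
          ψ (fun k : Fin (n + 1) => (f x)⁻¹ * tF σ f γ x (k : ℕ)) := by
        rw [pullCochain]
        congr 1
        funext k
        rw [twistCocycle, tF]
        simp [mul_inv_rev, mul_assoc]
      rw [e2a, hψ]
      simp only [psiF]
      congr 1
      funext k
      rw [vvAux, if_pos k.isLt]
    have e3 : sHomotopy σ f (n + 1) (coboundG n ψ) γ x =
        ∑ i ∈ Finset.range (n + 1), (-1 : ℝ) ^ i *
          ∑ j ∈ Finset.range (n + 2), (-1 : ℝ) ^ j *
            psiF n ψ (ddAux j (ppAux (aF σ γ x) (tF σ f γ x) i)) := by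
      rw [sHomotopy]
      refine Finset.sum_congr rfl fun i _ => ?_
      congr 1
      have harg : sTerm σ f (n + 1) i (coboundG n ψ) γ x =
          coboundG n ψ (fun k : Fin (n + 2) => ppAux (aF σ γ x) (tF σ f γ x) i (k : ℕ)) := by
        rw [sTerm]
        congr 1
        funext k
        by_cases h1 : (k : ℕ) ≤ i
        · rw [if_pos h1, ppAux, if_pos h1]; rfl
        · rw [if_neg h1, ppAux, if_neg h1]
          by_cases h2 : (k : ℕ) = i + 1
          · rw [if_pos h2]
            have hk : (k : ℕ) - 1 = i := by omega
            rw [hk]; rfl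
          · rw [if_neg h2]; rfl
      rw [harg, coboundG_eq]
    have e4 : coboundCochain (n + 1) (sHomotopy σ f n ψ) γ x =
        ∑ j ∈ Finset.range (n + 1), (-1 : ℝ) ^ j *
          ∑ i ∈ Finset.range n, (-1 : ℝ) ^ i *
            psiF n ψ (ppAux (ddAux j (aF σ γ x)) (ddAux j (tF σ f γ x)) i) := by
      rw [coboundCochain]
      refine Finset.sum_congr rfl fun j _ => ?_
      congr 1
      rw [sHomotopy]
      refine Finset.sum_congr rfl fun i _ => ?_
      congr 1
      have hat : ∀ u : ℕ, (σ ((if u < j then γ u else γ (u + 1)))⁻¹ x)⁻¹ =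
          ddAux j (aF σ γ x) u := by
        intro u
        simp only [ddAux, aF]
        split_ifs <;> rfl
      have htt : ∀ u : ℕ, (σ ((if u < j then γ u else γ (u + 1)))⁻¹ x)⁻¹ *
          f (((if u < j then γ u else γ (u + 1)))⁻¹ • x) = ddAux j (tF σ f γ x) u := by
        intro u
        simp only [ddAux, tF]
        split_ifs <;> rfl
      rw [sTerm]
      simp only [psiF]
      congr 1
      funext k
      by_cases h1 : (k : ℕ) ≤ i
      · rw [if_pos h1, ppAux, if_pos h1, htt]
      · rw [if_neg h1, ppAux, if_neg h1]
        by_cases h2 : (k : ℕ) = i + 1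
        · have hk : (k : ℕ) - 1 = i := by omega
          rw [if_pos h2, hk, hat]
        · rw [if_neg h2, hat]
    rw [e1, e2, e3, e4]
    exact key
  refine ⟨main, fun h γ x => ?_⟩
  have h0 : sHomotopy σ f (n + 1) (coboundG n ψ) γ x = 0 := by
    rw [sHomotopy]
    refine Finset.sum_eq_zero fun i _ => ?_
    rw [sTerm, h]
    ring
  have := main γ x
  rw [h0, zero_add] at this
  exact this
end
end
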